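/- For each μ > 0 and each z ∈ (−μ/2, μ/2), f(μ/2) ≥ f(μ/2 + z). -/

import Mathlib

open MeasureTheory ProbabilityTheory

noncomputable section

/-- `ℓ¹` distance between two lattice points: the number of steps of an up-right path. -/
def pathLen (u v : ℤ × ℤ) : ℕ := (v.1 - u.1).natAbs + (v.2 - u.2).natAbs

/-- Up-right lattice paths from `u` to `v`, encoded as sequences of vertices. -/
def upRightPaths (u v : ℤ × ℤ) : Set (ℕ → ℤ × ℤ) :=
  {γ | γ 0 = u ∧ γ (pathLen u v) = v ∧
    ∀ i < pathLen u v, γ (i + 1) - γ i = (1, 0) ∨ γ (i + 1) - γ i = (0, 1)}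

/-- Point-to-point polymer partition function in the environment `Y`
(the weight at the starting point is excluded). -/
def Zpp (Y : ℤ × ℤ → ℝ) (u v : ℤ × ℤ) : ℝ :=
  if u = v then 0 else
    ∑' γ : upRightPaths u v, ∏ i ∈ Finset.range (pathLen u v), Y (γ.1 (i + 1))

/-- Point-to-set partition function. -/
def Zps (Y : ℤ × ℤ → ℝ) (u : ℤ × ℤ) (B : Set (ℤ × ℤ)) : ℝ :=
  ∑' b : B, Zpp Y u ↑b

/-- Set-to-set partition function. -/
def Zss (Y : ℤ × ℤ → ℝ) (A B : Set (ℤ × ℤ)) : ℝ :=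
  ∑' (a : A) (b : B), Zpp Y ↑a ↑b

/-- Partition function restricted to paths all of whose vertices lie in `S`. -/
def ZppIn (Y : ℤ × ℤ → ℝ) (S : Set (ℤ × ℤ)) (u v : ℤ × ℤ) : ℝ :=
  if u = v then 0 else
    ∑' γ : {γ : ℕ → ℤ × ℤ // γ ∈ upRightPaths u v ∧ ∀ i ≤ pathLen u v, γ i ∈ S},
      ∏ i ∈ Finset.range (pathLen u v), Y (γ.1 (i + 1))

/-- Partition function over paths some vertex of which deviates, in the anti-diagonal
direction, by `ℓ^∞`-distance more than `k` from the main diagonal; i.e. paths exiting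
one of the long sides (the ones parallel to the diagonal) of a diagonal parallelogram
of width parameter `k`. -/
def ZppExitDiag (Y : ℤ × ℤ → ℝ) (k : ℝ) (u v : ℤ × ℤ) : ℝ :=
  if u = v then 0 else
    ∑' γ : {γ : ℕ → ℤ × ℤ // γ ∈ upRightPaths u v ∧
        ∃ i ≤ pathLen u v, 2 * k < |((γ i).1 : ℝ) - ((γ i).2 : ℝ)|},
      ∏ i ∈ Finset.range (pathLen u v), Y (γ.1 (i + 1))

/-- Set-to-set version of `ZppExitDiag`. -/
def ZssExitDiag (Y : ℤ × ℤ → ℝ) (k : ℝ) (A B : Set (ℤ × ℤ)) : ℝ :=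
  ∑' (a : A) (b : B), ZppExitDiag Y k ↑a ↑b

/-- The anti-diagonal line `L_a` through the lattice point `a`. -/
def antiLine (a : ℤ × ℤ) : Set (ℤ × ℤ) := {x | x.1 + x.2 = a.1 + a.2}

/-- The anti-diagonal segment `L_a^k` of `ℓ^∞`-radius `k` centered at `a`. -/
def antiSeg (a : ℤ × ℤ) (k : ℝ) : Set (ℤ × ℤ) :=
  {x | x.1 + x.2 = a.1 + a.2 ∧ |(x.1 : ℝ) - (a.1 : ℝ)| ≤ k}

/-- The lattice parallelogram `R^k_{u,v}` with corners `u ± (-k, k)` and `v ± (-k, k)`. -/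
def para (u v : ℤ × ℤ) (k : ℝ) : Set (ℤ × ℤ) :=
  {p | u.1 + u.2 ≤ p.1 + p.2 ∧ p.1 + p.2 ≤ v.1 + v.2 ∧
    |(((p.1 : ℝ) - (p.2 : ℝ)) - ((u.1 : ℝ) - (u.2 : ℝ))) -
        (((p.1 : ℝ) + (p.2 : ℝ)) - ((u.1 : ℝ) + (u.2 : ℝ))) /
            (((v.1 : ℝ) + (v.2 : ℝ)) - ((u.1 : ℝ) + (u.2 : ℝ))) *
          (((v.1 : ℝ) - (v.2 : ℝ)) - ((u.1 : ℝ) - (u.2 : ℝ)))| ≤ 2 * k}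

/-- The polygamma function `Ψ_k`, the `(k+1)`-st derivative of `log Γ`. -/
def polyGamma (k : ℕ) (s : ℝ) : ℝ :=
  iteratedDeriv (k + 1) (fun x => Real.log (Real.Gamma x)) s

/-- The characteristic direction `ξ[ρ]` of the inverse-gamma polymer with shape `m`. -/
def charDir (m ρ : ℝ) : ℝ × ℝ :=
  (polyGamma 1 ρ / (polyGamma 1 ρ + polyGamma 1 (m - ρ)),
    polyGamma 1 (m - ρ) / (polyGamma 1 ρ + polyGamma 1 (m - ρ)))

/-- The shape function `f(ρ)` of the inverse-gamma polymer with shape `m`. -/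
def shapeFn (m ρ : ℝ) : ℝ :=
  -((polyGamma 1 ρ * polyGamma 0 (m - ρ) + polyGamma 1 (m - ρ) * polyGamma 0 ρ) /
    (polyGamma 1 ρ + polyGamma 1 (m - ρ)))

/-- The lattice point obtained by rounding `2N ξ[ρ]`. -/
def dirTarget (m ρ : ℝ) (N : ℕ) : ℤ × ℤ :=
  (⌊2 * (N : ℝ) * (charDir m ρ).1⌋, ⌊2 * (N : ℝ) * (charDir m ρ).2⌋)

/-- Density of the inverse-gamma distribution with shape parameter `m`. -/
def invGammaPdf (m x : ℝ) : ℝ :=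
  if 0 < x then (Real.Gamma m)⁻¹ * x ^ (-m - 1) * Real.exp (-x⁻¹) else 0

/-- The inverse-gamma distribution with shape parameter `m`. -/
def invGammaMeasure (m : ℝ) : Measure ℝ :=
  MeasureTheory.volume.withDensity fun x => ENNReal.ofReal (invGammaPdf m x)

/-- The weights `Y z`, `z ∈ ℤ²`, are i.i.d. inverse-gamma with shape `m` under `P`. -/
def IsInvGammaEnv {Ω : Type*} [MeasurableSpace Ω] (P : Measure Ω) (m : ℝ)
    (Y : ℤ × ℤ → Ω → ℝ) : Prop :=
  (∀ z, Measurable (Y z)) ∧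
    iIndepFun Y P ∧
    ∀ z, P.map (Y z) = invGammaMeasure m

/-- Pearson correlation coefficient of two real random variables. -/
def corr {Ω : Type*} [MeasurableSpace Ω] (P : Measure Ω) (f g : Ω → ℝ) : ℝ :=
  ((∫ ω, f ω * g ω ∂P) - (∫ ω, f ω ∂P) * (∫ ω, g ω ∂P)) /
    (Real.sqrt (variance f P) * Real.sqrt (variance g P))

/-!
On `(0, ∞)` the trigamma function `Ψ₁(x) = 1/x² + ∑ 1/(x+n+1)²` is positive and decreasing, so
`Ψ₀` is increasing and concave. The series for `Ψ₀` comes from differentiating Bohr–Mollerup's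
approximations `logGammaSeq` of `log Γ` (their derivatives converge locally uniformly), and the
series for `Ψ₁` from differentiating that one termwise.

With `a = μ/2 + z`, `b = μ/2 - z`, `-f(a)` is the average of `Ψ₀(b)` and `Ψ₀(a)` with weights
`Ψ₁(a)` and `Ψ₁(b)`, while `-f(μ/2) = Ψ₀(μ/2)`. For `z ≥ 0` the mean value theorem and the
monotonicity of `Ψ₁` give `Ψ₀(a) - Ψ₀(μ/2) ≥ z Ψ₁(a)` and `Ψ₀(μ/2) - Ψ₀(b) ≤ z Ψ₁(b)`, so
`Ψ₁(b) (Ψ₀(a) - Ψ₀(μ/2)) ≥ z Ψ₁(a) Ψ₁(b) ≥ Ψ₁(a) (Ψ₀(μ/2) - Ψ₀(b))`, which is `f(a) ≤ f(μ/2)`.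
The case `z < 0` follows from the symmetry `f(μ - ρ) = f(ρ)`.
-/

open Real Filter Set

lemma le_deriv_weighted_avg_of_antitoneOn_deriv {φ : ℝ → ℝ} {c z : ℝ} (hz : 0 ≤ z)
    (hφ : DifferentiableOn ℝ φ (Icc (c - z) (c + z)))
    (hanti : AntitoneOn (deriv φ) (Icc (c - z) (c + z))) (hpos : 0 < deriv φ (c + z)) :
    φ c ≤ (deriv φ (c + z) * φ (c - z) + deriv φ (c - z) * φ (c + z)) /
      (deriv φ (c + z) + deriv φ (c - z)) := by
  have hlo : c - z ∈ Icc (c - z) (c + z) := ⟨le_rfl, by linarith⟩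
  have hhi : c + z ∈ Icc (c - z) (c + z) := ⟨by linarith, le_rfl⟩
  have hc : c ∈ Icc (c - z) (c + z) := ⟨by linarith, by linarith⟩
  have hderiv_le : deriv φ (c + z) ≤ deriv φ (c - z) := hanti hlo hhi (by linarith)
  have hcont := hφ.continuousOn
  have hint := hφ.mono interior_subset
  have hright : deriv φ (c + z) * (c + z - c) ≤ φ (c + z) - φ c :=
    (convex_Icc _ _).mul_sub_le_image_sub_of_le_deriv hcont hint
      (fun x hx => hanti (interior_subset hx) hhi (interior_subset hx).2) c hc (c + z) hhi
      (by linarith)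
  have hleft : φ c - φ (c - z) ≤ deriv φ (c - z) * (c - (c - z)) :=
    (convex_Icc _ _).image_sub_le_mul_sub_of_deriv_le hcont hint
      (fun x hx => hanti hlo (interior_subset hx) (interior_subset hx).1) (c - z) hlo c hc
      (by linarith)
  rw [le_div_iff₀ (by linarith)]
  nlinarith [mul_le_mul_of_nonneg_left hright (hpos.le.trans hderiv_le),
    mul_le_mul_of_nonneg_left hleft hpos.le]

def digammaSeries (x : ℝ) : ℝ :=
  -eulerMascheroniConstant - x⁻¹ + ∑' n : ℕ, (((n : ℝ) + 1)⁻¹ - (x + n + 1)⁻¹)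

def trigammaSeries (x : ℝ) : ℝ :=
  (x ^ 2)⁻¹ + ∑' n : ℕ, ((x + n + 1) ^ 2)⁻¹

lemma summable_inv_nat_add_one_sq : Summable fun n : ℕ => (((n : ℝ) + 1) ^ 2)⁻¹ := by
  exact_mod_cast (summable_nat_add_iff 1).mpr (Real.summable_nat_pow_inv.mpr one_lt_two)

lemma digammaSeries_term_nonneg {x : ℝ} (hx : 0 ≤ x) (n : ℕ) :
    0 ≤ ((n : ℝ) + 1)⁻¹ - (x + n + 1)⁻¹ :=
  sub_nonneg.mpr (inv_anti₀ (by positivity) (by linarith))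

lemma digammaSeries_term_le {x : ℝ} (hx : 0 ≤ x) (n : ℕ) :
    ((n : ℝ) + 1)⁻¹ - (x + n + 1)⁻¹ ≤ x * (((n : ℝ) + 1) ^ 2)⁻¹ := by
  have h : ((n : ℝ) + 1)⁻¹ - (x + n + 1)⁻¹ = x * (((n : ℝ) + 1) * (x + n + 1))⁻¹ := by
    field_simp
    ring
  rw [h]
  gcongr
  nlinarith

lemma hasDerivAt_digammaSeries {x : ℝ} (hx : 0 < x) :
    HasDerivAt digammaSeries (trigammaSeries x) x := by
  have hterm (n : ℕ) (y : ℝ) (hy : y ∈ Ioi (0 : ℝ)) :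
      HasDerivAt (fun y : ℝ => ((n : ℝ) + 1)⁻¹ - (y + n + 1)⁻¹) (((y + n + 1) ^ 2)⁻¹) y := by
    have hne : y + n + 1 ≠ 0 := by have : (0 : ℝ) < y := hy; positivity
    simpa [neg_div] using
      ((((hasDerivAt_id y).add_const (n : ℝ)).add_const 1).inv hne).const_sub (((n : ℝ) + 1)⁻¹)
  have htsum := hasDerivAt_tsum_of_isPreconnected summable_inv_nat_add_one_sq isOpen_Ioi
    isPreconnected_Ioi hterm (fun n y (hy : 0 < y) => ?_) (mem_Ioi.mpr hx)
    (summable_inv_nat_add_one_sq.mul_left x |>.of_nonneg_of_le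
      (digammaSeries_term_nonneg hx.le) (digammaSeries_term_le hx.le)) (mem_Ioi.mpr hx)
  · have hinv : HasDerivAt (fun y : ℝ => -eulerMascheroniConstant - y⁻¹) ((x ^ 2)⁻¹) x := by
      simpa using ((hasDerivAt_inv hx.ne').const_sub _)
    exact hinv.add htsum
  · rw [Real.norm_of_nonneg (by positivity)]
    gcongr
    linarith

lemma hasDerivAt_logGammaSeq (n : ℕ) {x : ℝ} (hx : 0 < x) :
    HasDerivAt (fun y => BohrMollerup.logGammaSeq y n)
      (log n - ∑ m ∈ Finset.range (n + 1), (x + m)⁻¹) x := by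
  have hlog : HasDerivAt (fun y : ℝ => ∑ m ∈ Finset.range (n + 1), log (y + m))
      (∑ m ∈ Finset.range (n + 1), (x + m)⁻¹) x :=
    HasDerivAt.fun_sum fun m _ => by
      simpa using ((hasDerivAt_id x).add_const (m : ℝ)).log (by positivity)
  have hlin : HasDerivAt (fun y : ℝ => y * log n + log n.factorial) (log n) x := by
    simpa using ((hasDerivAt_id x).mul_const (log n)).add_const (log n.factorial)
  exact hlin.sub hlog

/-- The derivative of `logGammaSeq · n`, split into the three pieces that converge to those of
`digammaSeries`. -/
lemma log_sub_sum_inv_eq (n : ℕ) (x : ℝ) :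
    log n - ∑ m ∈ Finset.range (n + 1), (x + m)⁻¹ =
      (log n - harmonic n) +
        (-x⁻¹ + ∑ m ∈ Finset.range n, (((m : ℝ) + 1)⁻¹ - (x + m + 1)⁻¹)) := by
  have hharm : (harmonic n : ℝ) = ∑ m ∈ Finset.range n, ((m : ℝ) + 1)⁻¹ := by
    simp [harmonic]
  rw [Finset.sum_range_succ', Finset.sum_sub_distrib, hharm]
  simp only [Nat.cast_add, Nat.cast_one, Nat.cast_zero, add_zero, add_assoc]
  ring

lemma tendstoLocallyUniformlyOn_deriv_logGammaSeq :
    TendstoLocallyUniformlyOn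
      (fun (n : ℕ) (x : ℝ) => log n - ∑ m ∈ Finset.range (n + 1), (x + m)⁻¹)
      digammaSeries atTop (Ioi 0) := by
  rw [tendstoLocallyUniformlyOn_iff_forall_isCompact isOpen_Ioi]
  intro K hK hKc
  obtain ⟨R, hR⟩ := hKc.bddAbove
  have hconst : TendstoUniformlyOn (fun (n : ℕ) (_ : ℝ) => log n - harmonic n)
      (fun _ => -eulerMascheroniConstant) atTop K := by
    refine Tendsto.tendstoUniformlyOn_const ?_ K
    simpa using tendsto_harmonic_sub_log.neg
  have hinv : TendstoUniformlyOn (fun (_ : ℕ) (x : ℝ) => -x⁻¹) (fun x => -x⁻¹) atTop K :=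
    fun _ hu => .of_forall fun _ _ _ => refl_mem_uniformity hu
  have hsum := tendstoUniformlyOn_tsum_nat (summable_inv_nat_add_one_sq.mul_left R)
    (f := fun (m : ℕ) (x : ℝ) => ((m : ℝ) + 1)⁻¹ - (x + m + 1)⁻¹) (s := K) fun m x hx => by
      have hx0 : 0 ≤ x := (hK hx).le
      rw [Real.norm_of_nonneg (digammaSeries_term_nonneg hx0 m)]
      exact (digammaSeries_term_le hx0 m).trans (by gcongr; exact hR hx)
  refine (hconst.fun_add (hinv.fun_add hsum)).congr (.of_forall fun n x _ => ?_) |>.congr_right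
    fun x _ => ?_
  · exact (log_sub_sum_inv_eq n x).symm
  · simp only [digammaSeries]
    ring

lemma hasDerivAt_log_Gamma {x : ℝ} (hx : 0 < x) :
    HasDerivAt (fun y => log (Gamma y)) (digammaSeries x) x :=
  hasDerivAt_of_tendstoLocallyUniformlyOn isOpen_Ioi tendstoLocallyUniformlyOn_deriv_logGammaSeq
    (.of_forall fun n _ hy => hasDerivAt_logGammaSeq n hy)
    (fun _ hy => BohrMollerup.tendsto_log_gamma hy) hx

lemma deriv_polyGamma (k : ℕ) : deriv (polyGamma k) = polyGamma (k + 1) := by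
  funext s
  exact (congrFun (iteratedDeriv_succ (n := k + 1)) s).symm

lemma polyGamma_zero_eq_digammaSeries {x : ℝ} (hx : 0 < x) : polyGamma 0 x = digammaSeries x := by
  rw [polyGamma, iteratedDeriv_one]
  exact (hasDerivAt_log_Gamma hx).deriv

lemma hasDerivAt_polyGamma_zero {x : ℝ} (hx : 0 < x) :
    HasDerivAt (polyGamma 0) (trigammaSeries x) x :=
  (hasDerivAt_digammaSeries hx).congr_of_eventuallyEq <|
    (eventually_gt_nhds hx).mono fun _ hy => polyGamma_zero_eq_digammaSeries hy

lemma polyGamma_one_eq_trigammaSeries {x : ℝ} (hx : 0 < x) :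
    polyGamma 1 x = trigammaSeries x := by
  rw [← deriv_polyGamma]
  exact (hasDerivAt_polyGamma_zero hx).deriv

lemma summable_trigammaSeries_term {x : ℝ} (hx : 0 ≤ x) :
    Summable fun n : ℕ => ((x + n + 1) ^ 2)⁻¹ :=
  summable_inv_nat_add_one_sq.of_nonneg_of_le (fun _ => by positivity)
    fun n => by gcongr; linarith

lemma trigammaSeries_pos {x : ℝ} (hx : 0 < x) : 0 < trigammaSeries x :=
  add_pos_of_pos_of_nonneg (by positivity) (tsum_nonneg fun _ => by positivity)

lemma trigammaSeries_antitoneOn : AntitoneOn trigammaSeries (Ioi 0) := by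
  intro x (hx : 0 < x) y (hy : 0 < y) hxy
  refine add_le_add (by gcongr) ?_
  exact (summable_trigammaSeries_term hy.le).tsum_le_tsum (fun n => by gcongr)
    (summable_trigammaSeries_term hx.le)

lemma shapeFn_sub (m ρ : ℝ) : shapeFn m (m - ρ) = shapeFn m ρ := by
  simp only [shapeFn, sub_sub_cancel]
  ring

lemma shapeFn_half {m : ℝ} (h : polyGamma 1 (m / 2) ≠ 0) :
    shapeFn m (m / 2) = -polyGamma 0 (m / 2) := by
  rw [shapeFn, sub_half]
  field_simp

lemma differentiableOn_polyGamma_zero : DifferentiableOn ℝ (polyGamma 0) (Ioi 0) :=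
  fun _ hx => (hasDerivAt_polyGamma_zero hx).differentiableAt.differentiableWithinAt

lemma polyGamma_one_pos {x : ℝ} (hx : 0 < x) : 0 < polyGamma 1 x :=
  polyGamma_one_eq_trigammaSeries hx ▸ trigammaSeries_pos hx

lemma antitoneOn_polyGamma_one : AntitoneOn (polyGamma 1) (Ioi 0) :=
  trigammaSeries_antitoneOn.congr fun _ hx => (polyGamma_one_eq_trigammaSeries hx).symm

theorem shape_max_on_diagonal_general (m : ℝ) :
    ∀ z : ℝ, -(m / 2) < z → z < m / 2 → shapeFn m (m / 2 + z) ≤ shapeFn m (m / 2) := by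
  suffices h : ∀ z, 0 ≤ z → z < m / 2 → shapeFn m (m / 2 + z) ≤ shapeFn m (m / 2) by
    intro z hlo hhi
    rcases le_total 0 z with hz | hz
    · exact h z hz hhi
    · rw [← shapeFn_sub, show m - (m / 2 + z) = m / 2 + -z by ring]
      exact h (-z) (by linarith) (by linarith)
  intro z hz hzm
  have hpos : Icc (m / 2 - z) (m / 2 + z) ⊆ Ioi 0 := fun x hx => lt_of_lt_of_le (by linarith) hx.1
  have key := le_deriv_weighted_avg_of_antitoneOn_deriv hz
    (differentiableOn_polyGamma_zero.mono hpos)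
    (deriv_polyGamma 0 ▸ antitoneOn_polyGamma_one.mono hpos)
    (deriv_polyGamma 0 ▸ polyGamma_one_pos (by linarith))
  rw [deriv_polyGamma, zero_add] at key
  rw [shapeFn_half (polyGamma_one_pos (by linarith)).ne', shapeFn,
    show m - (m / 2 + z) = m / 2 - z by ring]
  linarith

/-- the shape function is maximal in the diagonal direction. -/
theorem shape_max_on_diagonal (m : ℝ) (hm : 0 < m) :
    ∀ z : ℝ, -(m / 2) < z → z < m / 2 → shapeFn m (m / 2 + z) ≤ shapeFn m (m / 2) :=
  shape_max_on_diagonal_general m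

end
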